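/- In the free unital non-associative algebra k{X} with generators primitive, the derivation y∂_x determined by (y∂_x)(x) = y and (y∂_x)(x') = 0 for all other generators x' preserves the space of primitive elements; more precisely, Δ((y∂_x)(u)) = Σ (y∂_x)(u₍₁₎) ⊗ u₍₂₎ + Σ u₍₁₎ ⊗ (y∂_x)(u₍₂₎) for all u ∈ k{X}. -/

import Mathlib

/- STATEMENT 3: In the free unital non-associative algebra k{x,y} with x, y primitive,
the derivation y∂_x (the derivation with (y∂_x)(x) = y, (y∂_x)(y) = 0) preserves
primitives; more precisely Δ((y∂_x)(u)) = Σ (y∂_x)(u₍₁₎) ⊗ u₍₂₎ + Σ u₍₁₎ ⊗ (y∂_x)(u₍₂₎)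
for every u. -/

/-! Because `Δ` is multiplicative and `D` is a derivation, both `Δ ∘ D` and
`(D ⊗ id + id ⊗ D) ∘ Δ` satisfy `φ (u * v) = φ u * Δ v + Δ u * φ v`, the second because
`D ⊗ id + id ⊗ D` is again a derivation. So the set where they agree is closed under products
(and is a subspace containing `1`), and it contains `x` and `y` by direct computation.
On a primitive `a` the right-hand side is `D a ⊗ 1 + 1 ⊗ D a`, since `D 1 = 0`. -/

open TensorProduct

noncomputable section

variable (K : Type*) [Field K] [CharZero K]

/-- The free unital non-associative algebra on two generators x, y. -/
abbrev F2 := MonoidAlgebra K (WithOne (FreeMagma (Fin 2)))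

def gen2 (i : Fin 2) : F2 K :=
  MonoidAlgebra.single (↑(FreeMagma.of i) : WithOne (FreeMagma (Fin 2))) 1

def IsLeibniz {R A : Type*} [CommSemiring R] [NonUnitalNonAssocSemiring A] [Module R A]
    (D : A →ₗ[R] A) : Prop :=
  ∀ u v, D (u * v) = D u * v + u * D v

namespace IsLeibniz

variable {R A : Type*} [CommSemiring R]

theorem map_one [NonAssocRing A] [Module R A] {D : A →ₗ[R] A} (hD : IsLeibniz D) :
    D 1 = 0 := by
  simpa using hD 1 1

theorem tensor [NonUnitalNonAssocSemiring A] [Module R A] [SMulCommClass R A A]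
    [IsScalarTower R A A] {D : A →ₗ[R] A} (hD : IsLeibniz D) :
    IsLeibniz (map D LinearMap.id + map LinearMap.id D) := by
  intro s t
  induction s using TensorProduct.induction_on with
  | zero => simp
  | add s₁ s₂ h₁ h₂ =>
    simp only [add_mul, map_add, h₁, h₂]
    abel
  | tmul a b =>
    induction t using TensorProduct.induction_on with
    | zero => simp
    | add t₁ t₂ h₁ h₂ =>
      simp only [mul_add, map_add, h₁, h₂]
      abel
    | tmul c d =>
      simp only [LinearMap.add_apply, map_tmul, LinearMap.id_apply,
        Algebra.TensorProduct.tmul_mul_tmul, hD a c, hD b d, add_tmul, tmul_add, add_mul, mul_add]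
      abel

end IsLeibniz

theorem FreeMagma.monoidAlgebra_induction {R α : Type*} [CommSemiring R]
    {motive : MonoidAlgebra R (WithOne (FreeMagma α)) → Prop}
    (one : motive 1) (gen : ∀ i, motive (MonoidAlgebra.single (WithOne.coe (FreeMagma.of i)) 1))
    (mul : ∀ u v, motive u → motive v → motive (u * v))
    (add : ∀ u v, motive u → motive v → motive (u + v))
    (smul : ∀ (c : R) u, motive u → motive (c • u))
    (u : MonoidAlgebra R (WithOne (FreeMagma α))) : motive u := by
  induction u using MonoidAlgebra.induction_linear with
  | zero => simpa using smul 0 1 one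
  | add u v hu hv => exact add u v hu hv
  | single m c =>
    rw [← mul_one c, ← MonoidAlgebra.smul_single']
    refine smul c _ ?_
    induction m using WithOne.recOneCoe with
    | one => exact one
    | coe w =>
      induction w using FreeMagma.recOnMul with
      | ih1 i => exact gen i
      | ih2 w₁ w₂ h₁ h₂ =>
        simpa [MonoidAlgebra.single_mul_single] using mul _ _ h₁ h₂

theorem yPartialx_preserves_primitives
    (Δ : F2 K →ₗ[K] F2 K ⊗[K] F2 K)
    (hΔmul : ∀ u v, Δ (u * v) = Δ u * Δ v)
    (hΔone : Δ 1 = 1 ⊗ₜ[K] 1)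
    (hΔgen : ∀ i, Δ (gen2 K i) = gen2 K i ⊗ₜ[K] 1 + 1 ⊗ₜ[K] gen2 K i)
    -- D = y∂_x : the derivation with D x = y and D y = 0
    (D : F2 K →ₗ[K] F2 K)
    (hD : ∀ u v, D (u * v) = D u * v + u * D v)
    (hDx : D (gen2 K 0) = gen2 K 1)
    (hDy : D (gen2 K 1) = 0) :
    (∀ u, Δ (D u) =
        (TensorProduct.map D LinearMap.id) (Δ u) +
          (TensorProduct.map LinearMap.id D) (Δ u)) ∧
      (∀ a, Δ a = a ⊗ₜ[K] 1 + 1 ⊗ₜ[K] a →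
        Δ (D a) = D a ⊗ₜ[K] 1 + 1 ⊗ₜ[K] D a) := by
  have hDone : D 1 = 0 := IsLeibniz.map_one hD
  let T : F2 K ⊗[K] F2 K →ₗ[K] F2 K ⊗[K] F2 K := map D LinearMap.id + map LinearMap.id D
  have hT : IsLeibniz T := IsLeibniz.tensor hD
  have key : ∀ u, Δ (D u) = T (Δ u) := by
    intro u
    induction u using FreeMagma.monoidAlgebra_induction with
    | one => simp [T, hΔone, hDone]
    | gen i =>
      change Δ (D (gen2 K i)) = T (Δ (gen2 K i))
      fin_cases i
      · simp [T, hDx, hΔgen, hDone]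
      · simp [T, hDy, hΔgen, hDone]
    | mul u v hu hv => rw [hD, map_add, hΔmul, hΔmul, hu, hv, hΔmul, hT]
    | add u v hu hv => simp only [map_add, hu, hv]
    | smul c u hu => simp only [map_smul, hu]
  refine ⟨key, fun a ha => ?_⟩
  simp [key a, T, ha, hDone]
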